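/- Let D be an identifying code of the infinite hexagonal grid H and let v ∈ D be a 1-cluster that is uncrowded. Then there exist two vertices w₁, w₂ ∈ D at distance two from v, with w₁ adjacent to a neighbor u₁ of v and w₂ adjacent to a second neighbor u₂ of v; in particular, v has at least two vertices of D at distance exactly two. -/

import Mathlib

/-- The infinite hexagonal grid on `ℤ × ℤ` ("brick wall" representation):
horizontal edges between `(x, y)` and `(x+1, y)`, and vertical edges between
`(x, y)` and `(x, y+1)` when `x + y` is even. -/
def hexGrid : SimpleGraph (ℤ × ℤ) where
  Adj a b := (a.2 = b.2 ∧ (a.1 = b.1 + 1 ∨ b.1 = a.1 + 1)) ∨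
    (a.1 = b.1 ∧ Even (a.1 + min a.2 b.2) ∧ (b.2 = a.2 + 1 ∨ a.2 = b.2 + 1))
  symm := ⟨by
    rintro a b (⟨h1, h2⟩ | ⟨h1, h2, h3⟩)
    · exact Or.inl ⟨h1.symm, h2.symm⟩
    · exact Or.inr ⟨h1.symm, by rwa [← h1, min_comm], h3.symm⟩⟩
  loopless := ⟨by
    rintro a (⟨h1, h2⟩ | ⟨h1, h2, h3⟩) <;> omega⟩

/-- The closed neighborhood `N[v]`. -/
def closedNbhd {V : Type*} (G : SimpleGraph V) (v : V) : Set V :=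
  insert v (G.neighborSet v)

/-- `D` is an identifying code: closed-neighborhood traces on `D` are
nonempty and pairwise distinct. -/
def IsIDCode {V : Type*} (G : SimpleGraph V) (D : Set V) : Prop :=
  (∀ x, (closedNbhd G x ∩ D).Nonempty) ∧
    ∀ x y : V, x ≠ y → closedNbhd G x ∩ D ≠ closedNbhd G y ∩ D

/-- `C` is a cluster: a connected component of the subgraph induced by `D`. -/
def IsCluster {V : Type*} (G : SimpleGraph V) (D C : Set V) : Prop :=
  C.Nonempty ∧ C ⊆ D ∧ (G.induce C).Connected ∧
    ∀ u ∈ C, ∀ v ∈ D, G.Adj u v → v ∈ C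

/-- `v` is a 1-cluster of `D`: it is in `D` and none of its neighbors is. -/
def IsOneCluster {V : Type*} (G : SimpleGraph V) (D : Set V) (v : V) : Prop :=
  v ∈ D ∧ ∀ u, G.Adj v u → u ∉ D

/-- A 1-cluster `v` is crowded if some neighbor `u ∉ D` of `v` has all of its
neighbors in `D`. -/
def IsCrowdedOne {V : Type*} (G : SimpleGraph V) (D : Set V) (v : V) : Prop :=
  ∃ u, G.Adj v u ∧ u ∉ D ∧ ∀ z, G.Adj u z → z ∈ D

/-- A 3-cluster: a cluster with exactly three vertices. -/
def IsThreeCluster {V : Type*} (G : SimpleGraph V) (D C : Set V) : Prop :=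
  IsCluster G D C ∧ C.ncard = 3

/-- `w` is the center of the 3-cluster `C`: it is adjacent to both other
vertices of `C`. -/
def IsCenter {V : Type*} (G : SimpleGraph V) (C : Set V) (w : V) : Prop :=
  w ∈ C ∧ ∀ u ∈ C, u ≠ w → G.Adj w u

/-- An open 3-cluster: the neighbor of the center outside the cluster has no
other neighbor in `D`. -/
def IsOpenThree {V : Type*} (G : SimpleGraph V) (D C : Set V) : Prop :=
  IsThreeCluster G D C ∧ ∀ w u, IsCenter G C w → G.Adj w u → u ∉ C →
    ∀ z, G.Adj u z → z ≠ w → z ∉ D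

/-- A closed 3-cluster: a 3-cluster that is not open. -/
def IsClosedThree {V : Type*} (G : SimpleGraph V) (D C : Set V) : Prop :=
  IsThreeCluster G D C ∧ ¬ IsOpenThree G D C

lemma exists_second_code (D : Set (ℤ × ℤ)) (hD : IsIDCode hexGrid D)
    (v : ℤ × ℤ) (hv : IsOneCluster hexGrid D v) {u : ℤ × ℤ}
    (hu : hexGrid.Adj v u) : ∃ w, w ∈ D ∧ hexGrid.Adj u w ∧ w ≠ v := by
  by_contra hcon
  push_neg at hcon
  apply hD.2 u v hu.ne'
  have hvD : closedNbhd hexGrid v ∩ D = {v} := by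
    ext z
    simp only [closedNbhd, Set.mem_inter_iff, Set.mem_insert_iff,
      SimpleGraph.mem_neighborSet, Set.mem_singleton_iff]
    constructor
    · rintro ⟨rfl | hz, hzD⟩
      · rfl
      · exact absurd hzD (hv.2 z hz)
    · rintro rfl; exact ⟨Or.inl rfl, hv.1⟩
  rw [hvD]
  ext z
  simp only [closedNbhd, Set.mem_inter_iff, Set.mem_insert_iff,
    SimpleGraph.mem_neighborSet, Set.mem_singleton_iff]
  constructor
  · rintro ⟨rfl | hz, hzD⟩
    · exact absurd hzD (hv.2 z hu)
    · by_contra hne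
      exact hne (hcon z hzD hz)
  · rintro rfl; exact ⟨Or.inr hu.symm, hv.1⟩

lemma dist_eq_two (D : Set (ℤ × ℤ)) (v u w : ℤ × ℤ)
    (hv : IsOneCluster hexGrid D v) (hvu : hexGrid.Adj v u)
    (huw : hexGrid.Adj u w) (hwD : w ∈ D) (hwv : w ≠ v) :
    hexGrid.dist v w = 2 := by
  have hle : hexGrid.dist v w ≤ 2 := by
    have := hexGrid.dist_le (SimpleGraph.Walk.cons hvu
      (SimpleGraph.Walk.cons huw SimpleGraph.Walk.nil))
    simpa using this
  have hreach : hexGrid.Reachable v w :=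
    ⟨SimpleGraph.Walk.cons hvu (SimpleGraph.Walk.cons huw SimpleGraph.Walk.nil)⟩
  have h0 : hexGrid.dist v w ≠ 0 := fun h =>
    hwv ((hreach.dist_eq_zero_iff).mp h).symm
  have h1 : hexGrid.dist v w ≠ 1 := fun h =>
    hv.2 w (SimpleGraph.dist_eq_one_iff_adj.mp h) hwD
  omega

/-- An uncrowded 1-cluster `v` in the infinite hexagonal grid has at least two
vertices of `D` at distance exactly two, reached through two distinct
neighbors of `v`. -/
theorem uncrowded_one_cluster_two_at_distance_two (D : Set (ℤ × ℤ))
    (hD : IsIDCode hexGrid D) (v : ℤ × ℤ) (hv : IsOneCluster hexGrid D v)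
    (huncr : ¬ IsCrowdedOne hexGrid D v) :
    ∃ u₁ u₂ w₁ w₂ : ℤ × ℤ, hexGrid.Adj v u₁ ∧ hexGrid.Adj v u₂ ∧ u₁ ≠ u₂ ∧
      w₁ ∈ D ∧ w₂ ∈ D ∧ hexGrid.Adj u₁ w₁ ∧ hexGrid.Adj u₂ w₂ ∧
      w₁ ≠ v ∧ w₂ ≠ v ∧ w₁ ≠ w₂ ∧
      hexGrid.dist v w₁ = 2 ∧ hexGrid.dist v w₂ = 2 := by
  obtain ⟨x, y⟩ := v
  set u₁ : ℤ × ℤ := (x + 1, y) with hu₁def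
  set u₂ : ℤ × ℤ := (x - 1, y) with hu₂def
  have hvu₁ : hexGrid.Adj (x, y) u₁ := Or.inl ⟨rfl, Or.inr rfl⟩
  have hvu₂ : hexGrid.Adj (x, y) u₂ := Or.inl ⟨rfl, Or.inl (by simp [hu₂def])⟩
  obtain ⟨w₁, hw₁D, hw₁adj, hw₁v⟩ := exists_second_code D hD _ hv hvu₁
  obtain ⟨w₂, hw₂D, hw₂adj, hw₂v⟩ := exists_second_code D hD _ hv hvu₂
  refine ⟨u₁, u₂, w₁, w₂, hvu₁, hvu₂, ?_, hw₁D, hw₂D, hw₁adj, hw₂adj,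
    hw₁v, hw₂v, ?_, dist_eq_two D _ _ _ hv hvu₁ hw₁adj hw₁D hw₁v,
    dist_eq_two D _ _ _ hv hvu₂ hw₂adj hw₂D hw₂v⟩
  · simp only [hu₁def, hu₂def, Prod.mk.injEq, ne_eq]
    omega
  · rintro rfl
    obtain ⟨a, b⟩ := w₁
    have h1 := hw₁adj
    have h2 := hw₂adj
    have hne : ¬ (a = x ∧ b = y) := by
      intro ⟨ha, hb⟩; exact hw₁v (by simp [ha, hb])
    simp only [hexGrid, hu₁def, hu₂def] at h1 h2
    rcases h1 with ⟨e1, e2 | e2⟩ | ⟨e1, _, e3 | e3⟩ <;>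
      rcases h2 with ⟨f1, f2 | f2⟩ | ⟨f1, _, f3 | f3⟩ <;> omega
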